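/- Let ρ : ℂ → (0,∞) be a C² function defining a flat metric on ℂ (log ρ is harmonic on ℂ), and let f, g : ℂ → ℂ be smooth orientation-preserving diffeomorphisms of ℂ, harmonic with respect to ρ, normalized by f(0) = g(0) = 0 and f(1) = g(1) = 1. If the Beltrami coefficients of the inverse maps coincide, μ_{f⁻¹}(w) = μ_{g⁻¹}(w) for all w ∈ ℂ, then f = g. -/

import Mathlib

noncomputable section

open Complex Set Topology

/-- Wirtinger derivative `∂f/∂z` of a map `f : ℂ → ℂ`, viewed as a map of `ℝ² = ℂ`. -/
def wdz (f : ℂ → ℂ) (z : ℂ) : ℂ :=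
  (1 / 2 : ℂ) * (fderiv ℝ f z 1 - Complex.I * fderiv ℝ f z Complex.I)

/-- Wirtinger derivative `∂f/∂z̄` of a map `f : ℂ → ℂ`. -/
def wdzbar (f : ℂ → ℂ) (z : ℂ) : ℂ :=
  (1 / 2 : ℂ) * (fderiv ℝ f z 1 + Complex.I * fderiv ℝ f z Complex.I)

/-- The Wirtinger derivative `(log ρ)_w` of the logarithm of a positive function `ρ`. -/
def wlog (ρ : ℂ → ℝ) (w : ℂ) : ℂ :=
  wdz (fun u => (Real.log (ρ u) : ℂ)) w

/-- A real valued function is harmonic on a set if its Laplacian `u_xx + u_yy` vanishes there. -/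
def IsHarmonicOn (u : ℂ → ℝ) (s : Set ℂ) : Prop :=
  ∀ z ∈ s,
    fderiv ℝ (fun w => fderiv ℝ u w 1) z 1 +
      fderiv ℝ (fun w => fderiv ℝ u w Complex.I) z Complex.I = 0

/-- `f` is harmonic on `Ω` with respect to the conformal metric `ρ(w)|dw|`:
the tension equation `f_zz̄ + (log ρ)_w(f) f_z f_z̄ = 0` holds on `Ω`. -/
def IsRhoHarmonicOn (f : ℂ → ℂ) (ρ : ℂ → ℝ) (Ω : Set ℂ) : Prop :=
  ∀ z ∈ Ω, wdz (wdzbar f) z + wlog ρ (f z) * wdz f z * wdzbar f z = 0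


section Helpers

open Polynomial Filter Bornology in
lemma wirtinger_apply (u : ℂ → ℂ) (z : ℂ) (v : ℂ) :
    fderiv ℝ u z v = wdz u z * v + wdzbar u z * (starRingEnd ℂ) v := by
  have hv2 : (v.re : ℂ) + (v.im : ℂ) * Complex.I = v := Complex.re_add_im v
  have hc : (starRingEnd ℂ) v = (v.re : ℂ) - (v.im : ℂ) * Complex.I := by
    apply Complex.ext <;> simp
  have hL : fderiv ℝ u z v
      = (v.re : ℂ) * fderiv ℝ u z 1 + (v.im : ℂ) * fderiv ℝ u z Complex.I := by
    conv_lhs => rw [← hv2]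
    rw [show ((v.re : ℂ) + (v.im : ℂ) * Complex.I)
        = (v.re : ℝ) • (1 : ℂ) + (v.im : ℝ) • Complex.I by simp [Complex.real_smul],
      map_add, map_smul, map_smul]
    simp [Complex.real_smul]
  rw [hL, hc]
  unfold wdz wdzbar
  set a := fderiv ℝ u z 1
  set b := fderiv ℝ u z Complex.I
  linear_combination (1/2 * (a - Complex.I * b)) * hv2 + (v.im : ℂ) * b * Complex.I_mul_I

lemma wdzbar_comp {u v : ℂ → ℂ} {z : ℂ} (hu : DifferentiableAt ℝ u z)
    (hv : DifferentiableAt ℝ v (u z)) :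
    wdzbar (fun w => v (u w)) z
      = wdz v (u z) * wdzbar u z + wdzbar v (u z) * (starRingEnd ℂ) (wdz u z) := by
  have hcomp : fderiv ℝ (fun w => v (u w)) z = (fderiv ℝ v (u z)).comp (fderiv ℝ u z) :=
    fderiv_comp z hv hu
  unfold wdzbar wdz
  rw [hcomp]
  simp only [ContinuousLinearMap.comp_apply]
  rw [wirtinger_apply v (u z) (fderiv ℝ u z 1), wirtinger_apply v (u z) (fderiv ℝ u z Complex.I)]
  simp only [map_sub, map_mul, map_add, Complex.conj_I, map_div₀, map_one, map_ofNat]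
  unfold wdz wdzbar
  set a := fderiv ℝ u z 1
  set b := fderiv ℝ u z Complex.I
  ring

lemma wdz_comp {u v : ℂ → ℂ} {z : ℂ} (hu : DifferentiableAt ℝ u z)
    (hv : DifferentiableAt ℝ v (u z)) :
    wdz (fun w => v (u w)) z
      = wdz v (u z) * wdz u z + wdzbar v (u z) * (starRingEnd ℂ) (wdzbar u z) := by
  have hcomp : fderiv ℝ (fun w => v (u w)) z = (fderiv ℝ v (u z)).comp (fderiv ℝ u z) :=
    fderiv_comp z hv hu
  unfold wdzbar wdz
  rw [hcomp]
  simp only [ContinuousLinearMap.comp_apply]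
  rw [wirtinger_apply v (u z) (fderiv ℝ u z 1), wirtinger_apply v (u z) (fderiv ℝ u z Complex.I)]
  simp only [map_sub, map_mul, map_add, Complex.conj_I, map_div₀, map_one, map_ofNat]
  unfold wdz wdzbar
  set a := fderiv ℝ u z 1
  set b := fderiv ℝ u z Complex.I
  ring

lemma wdz_id (z : ℂ) : wdz (fun w => w) z = 1 := by
  unfold wdz
  rw [show (fun w : ℂ => w) = id from rfl, fderiv_id]
  simp only [ContinuousLinearMap.coe_id', id_eq]
  rw [Complex.I_mul_I]; norm_num

lemma wdzbar_id (z : ℂ) : wdzbar (fun w => w) z = 0 := by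
  unfold wdzbar
  rw [show (fun w : ℂ => w) = id from rfl, fderiv_id]
  simp only [ContinuousLinearMap.coe_id', id_eq]
  rw [Complex.I_mul_I]; norm_num

lemma differentiableAt_of_wdzbar_eq_zero {u : ℂ → ℂ} {z : ℂ}
    (hu : DifferentiableAt ℝ u z) (h0 : wdzbar u z = 0) : DifferentiableAt ℂ u z := by
  have key : ∀ v, fderiv ℝ u z v = wdz u z * v := by
    intro v; rw [wirtinger_apply u z v, h0]; ring
  have h1 : HasFDerivAt u ((wdz u z • (1 : ℂ →L[ℂ] ℂ)).restrictScalars ℝ) z := by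
    have h := hu.hasFDerivAt
    convert h using 1
    ext v
    simp [key v, mul_comm]
  have h2 : HasFDerivAt (𝕜 := ℂ) u (wdz u z • (1 : ℂ →L[ℂ] ℂ)) z := by
    rw [hasFDerivAt_iff_isLittleO_nhds_zero] at h1 ⊢
    convert h1 using 2
    rfl
  exact h2.differentiableAt

open Polynomial Filter Bornology in
lemma poly_of_growth (n : ℕ) : ∀ (f : ℂ → ℂ), Differentiable ℂ f →
    (∃ C : ℝ, ∀ z : ℂ, 1 ≤ ‖z‖ → ‖f z‖ ≤ C * ‖z‖ ^ n) →
    ∃ p : Polynomial ℂ, ∀ z, f z = p.eval z := by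
  induction n with
  | zero =>
    rintro f hf ⟨C, hC⟩
    obtain ⟨M, hM⟩ := (isCompact_closedBall (0:ℂ) 1).exists_bound_of_continuousOn
      hf.continuous.continuousOn
    have hbd : ∀ z : ℂ, ‖f z‖ ≤ max C M := by
      intro z
      rcases le_or_gt ‖z‖ 1 with h | h
      · exact le_trans (hM z (by simpa [Metric.mem_closedBall, dist_eq_norm] using h))
          (le_max_right _ _)
      · have h2 := hC z h.le
        rw [pow_zero, mul_one] at h2
        exact h2.trans (le_max_left _ _)
    have heq := hf.apply_eq_apply_of_bounded
      (isBounded_iff_forall_norm_le.2 ⟨max C M, by rintro w ⟨z, rfl⟩; exact hbd z⟩)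
    exact ⟨Polynomial.C (f 0), fun z => by simp [heq z 0]⟩
  | succ n ih =>
    rintro f hf ⟨C, hC⟩
    have hC0 : 0 ≤ C := by
      have h1 := hC 1 (by simp)
      simp only [norm_one, one_pow, mul_one] at h1
      exact le_trans (norm_nonneg _) h1
    have hd : Differentiable ℂ (dslope f 0) := by
      rw [← differentiableOn_univ] at hf ⊢
      exact (Complex.differentiableOn_dslope (by simp)).2 hf
    obtain ⟨p, hp⟩ := ih (dslope f 0) hd ⟨C + ‖f 0‖, by
      intro z hz
      have hz0 : z ≠ 0 := by
        intro h; rw [h] at hz; simp at hz; linarith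
      have hds : dslope f 0 z = z⁻¹ • (f z - f 0) := by
        rw [dslope_of_ne f hz0]; simp [slope_def_field]; field_simp
      rw [hds, norm_smul, norm_inv]
      have hzpos : (0:ℝ) < ‖z‖ := by positivity
      have h2 : ‖f z - f 0‖ ≤ C * ‖z‖ ^ (n+1) + ‖f 0‖ :=
        le_trans (norm_sub_le _ _) (by gcongr; exact hC z hz)
      have h3 : ‖z‖⁻¹ * ‖f z - f 0‖ ≤ ‖z‖⁻¹ * (C * ‖z‖ ^ (n+1) + ‖f 0‖) :=
        mul_le_mul_of_nonneg_left h2 (by positivity)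
      refine le_trans h3 ?_
      rw [inv_mul_le_iff₀ hzpos, pow_succ]
      have hpow : 1 ≤ ‖z‖ ^ n * ‖z‖ := by
        have := one_le_pow₀ hz (n := n)
        nlinarith
      nlinarith [norm_nonneg (f 0), mul_le_mul_of_nonneg_left hpow (norm_nonneg (f 0))]⟩
    refine ⟨Polynomial.C (f 0) + Polynomial.X * p, fun z => ?_⟩
    have hkey := sub_smul_dslope f 0 z
    simp only [sub_zero, smul_eq_mul] at hkey
    rw [Polynomial.eval_add, Polynomial.eval_mul, Polynomial.eval_C, Polynomial.eval_X, ← hp z]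
    linear_combination -hkey

open Polynomial Filter Bornology in
lemma exists_poly (h k : ℂ → ℂ) (hh : Differentiable ℂ h) (hk : Continuous k)
    (hkh : ∀ z, k (h z) = z) :
    ∃ p : Polynomial ℂ, ∀ z, h z = p.eval z := by
  -- h is proper
  have hproper : Tendsto h (cocompact ℂ) (cocompact ℂ) := by
    rw [Filter.hasBasis_cocompact.tendsto_right_iff]
    intro K hK
    rw [Filter.hasBasis_cocompact.eventually_iff]
    exact ⟨k '' K, hK.image hk, fun z hz hmem => hz ⟨h z, hmem, hkh z⟩⟩
  have hcob : Tendsto h (cobounded ℂ) (cobounded ℂ) := by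
    rw [Metric.cobounded_eq_cocompact]; exact hproper
  -- inversion tends to cobounded
  have hinv : Tendsto (fun z : ℂ => z⁻¹) (𝓝[≠] (0:ℂ)) (cobounded ℂ) := by
    rw [← tendsto_norm_atTop_iff_cobounded]
    have h1 : Tendsto (fun z : ℂ => ‖z‖) (𝓝[≠] 0) (𝓝[>] 0) := by
      apply tendsto_nhdsWithin_of_tendsto_nhds_of_eventually_within
      · have := (continuous_norm (E := ℂ)).tendsto 0
        simpa using this.mono_left nhdsWithin_le_nhds
      · exact eventually_mem_nhdsWithin.mono (fun z hz => by
          simpa [Set.mem_Ioi, norm_pos_iff] using hz)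
    have := tendsto_inv_nhdsGT_zero.comp h1
    simpa [Function.comp_def, norm_inv] using this
  have hHinv : Tendsto (fun z : ℂ => h z⁻¹) (𝓝[≠] (0:ℂ)) (cobounded ℂ) := hcob.comp hinv
  have hHnorm : Tendsto (fun z : ℂ => ‖h z⁻¹‖) (𝓝[≠] (0:ℂ)) atTop :=
    tendsto_norm_atTop_iff_cobounded.2 hHinv
  have hbig : ∀ᶠ z in 𝓝[≠] (0:ℂ), 1 ≤ ‖h z⁻¹‖ := hHnorm.eventually_ge_atTop 1
  set G : ℂ → ℂ := fun z => if z = 0 then 0 else (h z⁻¹)⁻¹ with hGdef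
  have hG0 : G 0 = 0 := if_pos rfl
  have hGanalytic : AnalyticAt ℂ G 0 := by
    apply Complex.analyticAt_of_differentiable_on_punctured_nhds_of_continuousAt
    · filter_upwards [hbig, self_mem_nhdsWithin] with z h1 h2
      have hz : z ≠ 0 := h2
      have hne : h z⁻¹ ≠ 0 := by
        intro e; rw [e] at h1; simp at h1; linarith
      have hdiff : DifferentiableAt ℂ (fun w : ℂ => (h w⁻¹)⁻¹) z := by
        have hin : DifferentiableAt ℂ (fun w : ℂ => h w⁻¹) z :=
          (hh.differentiableAt).comp z (differentiableAt_inv hz)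
        exact hin.inv hne
      apply hdiff.congr_of_eventuallyEq
      filter_upwards [isOpen_compl_singleton.mem_nhds hz] with w hw
      exact if_neg hw
    · rw [ContinuousAt, hG0]
      have hsup : 𝓝 (0:ℂ) = 𝓝[≠] (0:ℂ) ⊔ pure 0 :=
        (nhdsNE_sup_pure (0:ℂ)).symm
      nth_rewrite 1 [hsup]
      rw [tendsto_sup]
      constructor
      · have hten : Tendsto (fun z : ℂ => ‖h z⁻¹‖⁻¹) (𝓝[≠] (0:ℂ)) (𝓝 0) :=
          hHnorm.inv_tendsto_atTop
        apply squeeze_zero_norm' _ hten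
        filter_upwards [eventually_mem_nhdsWithin] with z hz
        have hz0 : z ≠ 0 := hz
        have : G z = (h z⁻¹)⁻¹ := if_neg hz0
        rw [this, norm_inv]
      · have := tendsto_pure_nhds G 0
        rwa [hG0] at this
  -- order is finite
  have hGne : ∀ᶠ z in 𝓝[≠] (0:ℂ), G z ≠ 0 := by
    filter_upwards [hbig, self_mem_nhdsWithin] with z h1 h2
    have hz : z ≠ 0 := h2
    have hne : h z⁻¹ ≠ 0 := by intro e; rw [e] at h1; simp at h1; linarith
    rw [hGdef]; simp only [if_neg hz]
    exact inv_ne_zero hne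
  have horder : analyticOrderAt G 0 ≠ ⊤ := by
    intro hcontra
    rw [analyticOrderAt_eq_top] at hcontra
    obtain ⟨z, h2, h3⟩ := ((hcontra.filter_mono nhdsWithin_le_nhds).and hGne).exists
    exact h3 h2
  obtain ⟨m, hm⟩ := ENat.ne_top_iff_exists.1 horder
  obtain ⟨ψ, hψa, hψ0, hev⟩ := hGanalytic.analyticOrderAt_eq_natCast.1 hm.symm
  have hψpos : (0:ℝ) < ‖ψ 0‖ := norm_pos_iff.2 hψ0
  have hψbig : ∀ᶠ z in 𝓝 (0:ℂ), ‖ψ 0‖ / 2 ≤ ‖ψ z‖ := by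
    have hn : Tendsto (fun z => ‖ψ z‖) (𝓝 (0:ℂ)) (𝓝 ‖ψ 0‖) := hψa.continuousAt.norm
    exact hn.eventually (eventually_ge_nhds (by linarith : ‖ψ 0‖ / 2 < ‖ψ 0‖))
  have hcomb : ∀ᶠ z in 𝓝[≠] (0:ℂ), ‖h z⁻¹‖ ≤ (2 / ‖ψ 0‖) * ‖z⁻¹‖ ^ m := by
    filter_upwards [hbig, hev.filter_mono nhdsWithin_le_nhds,
      hψbig.filter_mono nhdsWithin_le_nhds, self_mem_nhdsWithin] with z h1 h2 h3 h4
    have hz : z ≠ 0 := h4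
    have hzpos : (0:ℝ) < ‖z‖ := norm_pos_iff.2 hz
    have hG : G z = (h z⁻¹)⁻¹ := if_neg hz
    rw [hG] at h2
    have hnorm2 : ‖h z⁻¹‖⁻¹ = ‖z‖ ^ m * ‖ψ z‖ := by
      rw [← norm_inv, h2]
      simp [norm_smul, norm_pow]
    have hlow : (‖ψ 0‖ / 2) * ‖z‖ ^ m ≤ ‖h z⁻¹‖⁻¹ := by
      rw [hnorm2]
      calc (‖ψ 0‖ / 2) * ‖z‖ ^ m ≤ ‖ψ z‖ * ‖z‖ ^ m := by
            apply mul_le_mul_of_nonneg_right h3 (by positivity)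
        _ = ‖z‖ ^ m * ‖ψ z‖ := by ring
    have hpos2 : (0:ℝ) < (‖ψ 0‖ / 2) * ‖z‖ ^ m := mul_pos (by linarith) (pow_pos hzpos m)
    have hhpos : (0:ℝ) < ‖h z⁻¹‖ := by linarith
    have h5 : ‖h z⁻¹‖ ≤ ((‖ψ 0‖ / 2) * ‖z‖ ^ m)⁻¹ := by
      rw [← inv_inv (‖h z⁻¹‖)]
      gcongr
    have h6 : ((‖ψ 0‖ / 2) * ‖z‖ ^ m)⁻¹ = (2 / ‖ψ 0‖) * ‖z⁻¹‖ ^ m := by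
      rw [norm_inv, inv_pow]
      field_simp
    rw [h6] at h5
    exact h5
  -- extract a radius
  obtain ⟨ε, hε, hball⟩ := Metric.mem_nhdsWithin_iff.1 hcomb
  obtain ⟨M, hM⟩ := (isCompact_closedBall (0:ℂ) (ε⁻¹ + 1)).exists_bound_of_continuousOn
    hh.continuous.continuousOn
  apply poly_of_growth m h hh
  refine ⟨max (2 / ‖ψ 0‖) M, fun w hw => ?_⟩
  rcases le_or_gt ‖w‖ (ε⁻¹ + 1) with hcase | hcase
  · have : ‖h w‖ ≤ M := hM w (by simpa [Metric.mem_closedBall, dist_eq_norm] using hcase)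
    refine this.trans ?_
    have h1 : (1:ℝ) ≤ ‖w‖ ^ m := one_le_pow₀ hw
    have hMnn : M ≤ max (2 / ‖ψ 0‖) M := le_max_right _ _
    nlinarith [le_trans (norm_nonneg (h w)) this]
  · have hw0 : w ≠ 0 := by
      intro e; rw [e] at hw; simp at hw; linarith
    have hwinv : w⁻¹ ∈ Metric.ball (0:ℂ) ε ∩ {(0:ℂ)}ᶜ := by
      constructor
      · rw [Metric.mem_ball, dist_zero_right, norm_inv]
        have hεinv : ε⁻¹ < ‖w‖ := by linarith
        exact inv_lt_of_inv_lt₀ hε hεinv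
      · simp [inv_ne_zero hw0]
    have hP := hball hwinv
    simp only [Set.mem_setOf_eq, inv_inv] at hP
    refine hP.trans ?_
    have h1 : (0:ℝ) ≤ ‖w‖ ^ m := by positivity
    have : (2 / ‖ψ 0‖) ≤ max (2 / ‖ψ 0‖) M := le_max_left _ _
    nlinarith

open Polynomial Filter Bornology in
theorem main_assembly
    (f g finv ginv : ℂ → ℂ)
    (hf : ContDiff ℝ (⊤ : ℕ∞) f) (hg : ContDiff ℝ (⊤ : ℕ∞) g)
    (hfinv : ContDiff ℝ (⊤ : ℕ∞) finv) (hginv : ContDiff ℝ (⊤ : ℕ∞) ginv)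
    (hf1 : ∀ z, finv (f z) = z) (hf2 : ∀ w, f (finv w) = w)
    (hg1 : ∀ z, ginv (g z) = z) (hg2 : ∀ w, g (ginv w) = w)
    (hfOP : ∀ z, ‖wdzbar f z‖ < ‖wdz f z‖)
    (hgOP : ∀ z, ‖wdzbar g z‖ < ‖wdz g z‖)
    (hf0 : f 0 = 0) (hg0 : g 0 = 0) (hf1' : f 1 = 1) (hg1' : g 1 = 1)
    (hμ : ∀ w, wdzbar finv w / wdz finv w = wdzbar ginv w / wdz ginv w) :
    f = g := by
  have hfd : Differentiable ℝ f := hf.differentiable (by simp)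
  have hgd : Differentiable ℝ g := hg.differentiable (by simp)
  have hfinvd : Differentiable ℝ finv := hfinv.differentiable (by simp)
  have hginvd : Differentiable ℝ ginv := hginv.differentiable (by simp)
  have hfz : ∀ z, wdz f z ≠ 0 := by
    intro z e
    have := hfOP z
    rw [e] at this
    simp at this
    exact (norm_nonneg _).not_gt this
  have hgz : ∀ z, wdz g z ≠ 0 := by
    intro z e
    have := hgOP z
    rw [e] at this
    simp at this
    exact (norm_nonneg _).not_gt this
  -- identity equations for finv
  have he1 : ∀ z, wdz finv (f z) * wdzbar f z
      + wdzbar finv (f z) * (starRingEnd ℂ) (wdz f z) = 0 := by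
    intro z
    have hc := wdzbar_comp (hfd.differentiableAt) (hfinvd.differentiableAt) (z := z)
    have hid : (fun w => finv (f w)) = fun w : ℂ => w := funext hf1
    rw [hid, wdzbar_id z] at hc
    exact hc.symm
  have he2 : ∀ z, wdz finv (f z) * wdz f z
      + wdzbar finv (f z) * (starRingEnd ℂ) (wdzbar f z) = 1 := by
    intro z
    have hc := wdz_comp (hfd.differentiableAt) (hfinvd.differentiableAt) (z := z)
    have hid : (fun w => finv (f w)) = fun w : ℂ => w := funext hf1
    rw [hid, wdz_id z] at hc
    exact hc.symm
  have he1g : ∀ z, wdz ginv (g z) * wdzbar g z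
      + wdzbar ginv (g z) * (starRingEnd ℂ) (wdz g z) = 0 := by
    intro z
    have hc := wdzbar_comp (hgd.differentiableAt) (hginvd.differentiableAt) (z := z)
    have hid : (fun w => ginv (g w)) = fun w : ℂ => w := funext hg1
    rw [hid, wdzbar_id z] at hc
    exact hc.symm
  have he2g : ∀ z, wdz ginv (g z) * wdz g z
      + wdzbar ginv (g z) * (starRingEnd ℂ) (wdzbar g z) = 1 := by
    intro z
    have hc := wdz_comp (hgd.differentiableAt) (hginvd.differentiableAt) (z := z)
    have hid : (fun w => ginv (g w)) = fun w : ℂ => w := funext hg1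
    rw [hid, wdz_id z] at hc
    exact hc.symm
  -- nonvanishing of wdz finv and wdz ginv
  have hconjfz : ∀ z, (starRingEnd ℂ) (wdz f z) ≠ 0 := by
    intro z e
    exact hfz z (by simpa using e)
  have hconjgz : ∀ z, (starRingEnd ℂ) (wdz g z) ≠ 0 := by
    intro z e
    exact hgz z (by simpa using e)
  have hfinvz : ∀ w, wdz finv w ≠ 0 := by
    intro w e
    have e1 := he1 (finv w)
    have e2 := he2 (finv w)
    rw [hf2 w] at e1 e2
    rw [e] at e1 e2
    simp only [zero_mul, zero_add] at e1 e2
    have : wdzbar finv w = 0 := by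
      rcases mul_eq_zero.1 e1 with h | h
      · exact h
      · exact absurd h (hconjfz (finv w))
    rw [this, zero_mul] at e2
    exact zero_ne_one e2
  have hginvz : ∀ w, wdz ginv w ≠ 0 := by
    intro w e
    have e1 := he1g (ginv w)
    have e2 := he2g (ginv w)
    rw [hg2 w] at e1 e2
    rw [e] at e1 e2
    simp only [zero_mul, zero_add] at e1 e2
    have : wdzbar ginv w = 0 := by
      rcases mul_eq_zero.1 e1 with h | h
      · exact h
      · exact absurd h (hconjgz (ginv w))
    rw [this, zero_mul] at e2
    exact zero_ne_one e2
  -- the Beltrami coefficient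
  have hμf : ∀ w, wdzbar finv w = (wdzbar finv w / wdz finv w) * wdz finv w :=
    fun w => (div_mul_cancel₀ _ (hfinvz w)).symm
  have hμg : ∀ w, wdzbar ginv w = (wdzbar finv w / wdz finv w) * wdz ginv w := by
    intro w
    rw [hμ w]
    exact (div_mul_cancel₀ _ (hginvz w)).symm
  -- the key factored equations
  have hfbar : ∀ z, wdzbar f z
      + (wdzbar finv (f z) / wdz finv (f z)) * (starRingEnd ℂ) (wdz f z) = 0 := by
    intro z
    have e1 := he1 z
    rw [hμf (f z)] at e1
    have h0 := hfinvz (f z)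
    have e2 : wdz finv (f z) * (wdzbar f z
        + (wdzbar finv (f z) / wdz finv (f z)) * (starRingEnd ℂ) (wdz f z)) = 0 := by
      linear_combination e1
    rcases mul_eq_zero.1 e2 with h | h
    · exact absurd h h0
    · exact h
  have hgbar : ∀ z, wdzbar g z
      + (wdzbar finv (g z) / wdz finv (g z)) * (starRingEnd ℂ) (wdz g z) = 0 := by
    intro z
    have e1 := he1g z
    rw [hμg (g z)] at e1
    have h0 := hginvz (g z)
    have e2 : wdz ginv (g z) * (wdzbar g z
        + (wdzbar finv (g z) / wdz finv (g z)) * (starRingEnd ℂ) (wdz g z)) = 0 := by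
      linear_combination e1
    rcases mul_eq_zero.1 e2 with h | h
    · exact absurd h h0
    · exact h
  -- H = ginv ∘ f and K = finv ∘ g are entire
  have hHbar : ∀ z, wdzbar (fun w => ginv (f w)) z = 0 := by
    intro z
    rw [wdzbar_comp (hfd.differentiableAt) (hginvd.differentiableAt)]
    rw [hμg (f z)]
    linear_combination wdz ginv (f z) * hfbar z
  have hKbar : ∀ z, wdzbar (fun w => finv (g w)) z = 0 := by
    intro z
    rw [wdzbar_comp (hgd.differentiableAt) (hfinvd.differentiableAt)]
    rw [hμf (g z)]
    linear_combination wdz finv (g z) * hgbar z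
  have hHdiff : Differentiable ℂ (fun w => ginv (f w)) := fun z =>
    differentiableAt_of_wdzbar_eq_zero
      ((hginvd.differentiableAt).comp z (hfd.differentiableAt)) (hHbar z)
  have hKdiff : Differentiable ℂ (fun w => finv (g w)) := fun z =>
    differentiableAt_of_wdzbar_eq_zero
      ((hfinvd.differentiableAt).comp z (hgd.differentiableAt)) (hKbar z)
  -- mutual inverses
  have hKH : ∀ z, finv (g (ginv (f z))) = z := by
    intro z; rw [hg2, hf1]
  have hHK : ∀ z, ginv (f (finv (g z))) = z := by
    intro z; rw [hf2, hg1]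
  obtain ⟨p, hp⟩ := exists_poly (fun w => ginv (f w)) (fun w => finv (g w))
    hHdiff hKdiff.continuous hKH
  obtain ⟨q, hq⟩ := exists_poly (fun w => finv (g w)) (fun w => ginv (f w))
    hKdiff hHdiff.continuous hHK
  -- p.comp q = X
  have hcomp : p.comp q = Polynomial.X := by
    apply Polynomial.funext
    intro r
    rw [Polynomial.eval_comp, Polynomial.eval_X, ← hq r, ← hp (finv (g r))]
    exact hHK r
  have hdeg : p.natDegree = 1 := by
    have := Polynomial.natDegree_comp (p := p) (q := q)
    rw [hcomp, Polynomial.natDegree_X] at this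
    exact Nat.eq_one_of_mul_eq_one_right this.symm
  have hrep := Polynomial.eq_X_add_C_of_natDegree_le_one (hdeg.le)
  -- normalization
  have hginv0 : ginv 0 = 0 := by
    calc ginv 0 = ginv (g 0) := by rw [hg0]
    _ = 0 := hg1 0
  have hginv1 : ginv 1 = 1 := by
    calc ginv 1 = ginv (g 1) := by rw [hg1']
    _ = 1 := hg1 1
  have hH0 : p.eval 0 = 0 := by rw [← hp 0, hf0, hginv0]
  have hH1 : p.eval 1 = 1 := by rw [← hp 1, hf1', hginv1]
  rw [hrep] at hH0 hH1
  simp only [Polynomial.eval_add, Polynomial.eval_mul, Polynomial.eval_C, Polynomial.eval_X,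
    mul_zero, add_zero, mul_one, zero_add] at hH0 hH1
  -- conclude H = id
  have hc1 : p.coeff 1 = 1 := by
    rw [hH0] at hH1
    simpa using hH1
  have hHid : ∀ z, ginv (f z) = z := by
    intro z
    rw [hp z, hrep]
    simp [hH0, hc1]
  funext z
  rw [← hg2 (f z), hHid z]

end Helpers

/-- two normalized entire harmonic diffeomorphisms (flat metric) whose
inverses have the same Beltrami coefficient are equal. -/
theorem normalized_harmonic_unique
    (ρ : ℂ → ℝ) (hρpos : ∀ w, 0 < ρ w) (hρ : ContDiff ℝ 2 ρ)
    (hflat : IsHarmonicOn (fun w => Real.log (ρ w)) Set.univ)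
    (f g finv ginv : ℂ → ℂ)
    (hf : ContDiff ℝ (⊤ : ℕ∞) f) (hg : ContDiff ℝ (⊤ : ℕ∞) g)
    (hfinv : ContDiff ℝ (⊤ : ℕ∞) finv) (hginv : ContDiff ℝ (⊤ : ℕ∞) ginv)
    (hf1 : ∀ z, finv (f z) = z) (hf2 : ∀ w, f (finv w) = w)
    (hg1 : ∀ z, ginv (g z) = z) (hg2 : ∀ w, g (ginv w) = w)
    (hfOP : ∀ z, ‖wdzbar f z‖ < ‖wdz f z‖)
    (hgOP : ∀ z, ‖wdzbar g z‖ < ‖wdz g z‖)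
    (hfharm : IsRhoHarmonicOn f ρ Set.univ)
    (hgharm : IsRhoHarmonicOn g ρ Set.univ)
    (hf0 : f 0 = 0) (hg0 : g 0 = 0) (hf1' : f 1 = 1) (hg1' : g 1 = 1)
    (hμ : ∀ w, wdzbar finv w / wdz finv w = wdzbar ginv w / wdz ginv w) :
    f = g := by
  exact main_assembly f g finv ginv hf hg hfinv hginv hf1 hf2 hg1 hg2 hfOP hgOP
    hf0 hg0 hf1' hg1' hμ
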